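/- arXiv:2311.01626 — 5 statements merged into one kernel-verified Lean document; each statement's English description precedes it below -/
import Mathlib

section
/- Let N : V → ℝ≥0 be a quasi-norm on an abelian group V and let ‖x‖ := lim_{k→∞} N(k·x)/k be its homogenisation. Then ‖·‖ is homogeneous over ℤ (‖k·x‖ = |k|·‖x‖ for all k ∈ ℤ) and satisfies the triangle inequality ‖x+y‖ ≤ ‖x‖+‖y‖. -/
open Filter

/-- The homogenisation of a quasi-norm is homogeneous over ℤ and satisfies the
triangle inequality. -/
theorem quasinorm_homogenisation_is_seminorm {V : Type*} [AddCommGroup V]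
    (N : V → ℝ) (Δ : ℝ) (hΔ : 0 ≤ Δ)
    (hnonneg : ∀ x, 0 ≤ N x)
    (hposdef : ∀ x, N x = 0 ↔ x = 0)
    (hsymm : ∀ x, N (-x) = N x)
    (htri : ∀ x y, N (x + y) ≤ N x + N y + Δ)
    (ν : V → ℝ)
    (hν : ∀ x, Tendsto (fun k : ℕ => N (k • x) / k) atTop (nhds (ν x))) :
    (∀ (k : ℤ) (x : V), ν (k • x) = |(k : ℝ)| * ν x) ∧
    (∀ x y : V, ν (x + y) ≤ ν x + ν y) := by
  have hN0 : N 0 = 0 := (hposdef 0).mpr rfl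
  have key : ∀ (m : ℕ) (x : V),
      Tendsto (fun k : ℕ => N (k • (m • x)) / k) atTop (nhds ((m : ℝ) * ν x)) := by
    intro m x
    rcases Nat.eq_zero_or_pos m with hm | hm
    · subst hm
      simp only [zero_smul, smul_zero, hN0, zero_div, Nat.cast_zero, zero_mul]
      exact tendsto_const_nhds
    · have hmono : Tendsto (fun k : ℕ => k * m) atTop atTop := by
        apply tendsto_atTop_atTop.mpr
        intro b
        exact ⟨b, fun a ha => le_trans ha (Nat.le_mul_of_pos_right a hm)⟩
      have h2 := ((hν x).comp hmono).const_mul (m : ℝ)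
      refine h2.congr fun k => ?_
      have hs : k • (m • x) = (k * m) • x := (mul_smul k m x).symm
      rw [hs]
      simp only [Function.comp]
      rcases Nat.eq_zero_or_pos k with hk | hk
      · subst hk; simp [hN0]
      · have hk0 : (k : ℝ) ≠ 0 := Nat.cast_ne_zero.mpr hk.ne'
        have hm0 : (m : ℝ) ≠ 0 := Nat.cast_ne_zero.mpr hm.ne'
        push_cast
        field_simp
  have νm : ∀ (m : ℕ) (x : V), ν (m • x) = (m : ℝ) * ν x := fun m x =>
    tendsto_nhds_unique (hν (m • x)) (key m x)
  have νneg : ∀ x : V, ν (-x) = ν x := by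
    intro x
    refine tendsto_nhds_unique (hν (-x)) ((hν x).congr fun k => ?_)
    rw [smul_neg, hsymm]
  constructor
  · intro k x
    rcases k.eq_nat_or_neg with ⟨n, rfl | rfl⟩
    · rw [natCast_zsmul, νm]
      push_cast
      rw [abs_of_nonneg (Nat.cast_nonneg n)]
    · rw [neg_smul, natCast_zsmul, νneg, νm]
      push_cast
      rw [abs_neg, abs_of_nonneg (Nat.cast_nonneg n)]
  · intro x y
    have hbound : ∀ k : ℕ, N (k • (x + y)) / k ≤ N (k • x) / k + N (k • y) / k + Δ / k := by
      intro k
      rcases Nat.eq_zero_or_pos k with hk | hk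
      · subst hk; simp [hN0]
      · have hk0 : (0 : ℝ) < k := by exact_mod_cast hk
        rw [smul_add, ← add_div, ← add_div]
        exact div_le_div_of_nonneg_right (htri _ _) hk0.le
    have hrhs : Tendsto (fun k : ℕ => N (k • x) / k + N (k • y) / k + Δ / k) atTop
        (nhds (ν x + ν y + 0)) :=
      ((hν x).add (hν y)).add (tendsto_const_div_atTop_nhds_zero_nat Δ)
    have := le_of_tendsto_of_tendsto' (hν (x + y)) hrhs hbound
    simpa using this
end

section
/- Let N : V → ℝ≥0 be a quasi-norm on an abelian group V satisfying the doubling property 2·N(x) ≤ N(2·x) + D for all x ∈ V with a fixed constant D ≥ 0. Then N(x) ≤ ‖x‖ + D for all x ∈ V, where ‖·‖ is the homogenisation of N. -/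
/-!
Subtracting `D` turns the doubling property into `2 g(x) ≤ g(2x)` for `g = N - D`. Iterating,
`g(x) ≤ g(2^k x) / 2^k`, and along the powers of two the right-hand side tends to `‖x‖`.
-/

open Filter Topology

section
variable {M : Type*} [AddMonoid M]

theorem pow_mul_le_pow_nsmul_of_mul_le_nsmul {g : M → ℝ} {n : ℕ}
    (h : ∀ x, n * g x ≤ g (n • x)) (x : M) (k : ℕ) :
    (n : ℝ) ^ k * g x ≤ g (n ^ k • x) := by
  induction k with
  | zero => simp
  | succ k ih =>
    calc (n : ℝ) ^ (k + 1) * g x = n * ((n : ℝ) ^ k * g x) := by ring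
      _ ≤ n * g (n ^ k • x) := by gcongr
      _ ≤ g (n • n ^ k • x) := h _
      _ = g (n ^ (k + 1) • x) := by rw [smul_smul, pow_succ']

theorem le_of_tendsto_nsmul_div_of_mul_le_nsmul {g : M → ℝ} {n : ℕ} (hn : 1 < n)
    (h : ∀ x, n * g x ≤ g (n • x)) {x : M} {L : ℝ}
    (hL : Tendsto (fun k : ℕ => g (k • x) / k) atTop (𝓝 L)) : g x ≤ L := by
  refine ge_of_tendsto' (hL.comp (tendsto_pow_atTop_atTop_of_one_lt hn)) fun k => ?_
  rw [Function.comp_apply, le_div_iff₀ (by positivity), Nat.cast_pow, mul_comm]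
  exact pow_mul_le_pow_nsmul_of_mul_le_nsmul h x k

end

theorem quasinorm_le_homogenisation_add_of_doubling_general {V : Type*} [AddCommGroup V]
    (N : V → ℝ)
    (D : ℝ)
    (hdoub : ∀ x : V, 2 * N x ≤ N (2 • x) + D)
    (ν : V → ℝ)
    (hν : ∀ x, Tendsto (fun k : ℕ => N (k • x) / k) atTop (nhds (ν x))) :
    ∀ x : V, N x ≤ ν x + D := by
  intro x
  have hdoub_sub : ∀ y, ((2 : ℕ) : ℝ) * (N y - D) ≤ N (2 • y) - D := fun y => by
    push_cast; linarith [hdoub y]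
  have hlim : Tendsto (fun k : ℕ => (N (k • x) - D) / k) atTop (𝓝 (ν x)) := by
    simpa only [sub_div, sub_zero] using (hν x).sub (tendsto_const_div_atTop_nhds_zero_nat D)
  linarith [le_of_tendsto_nsmul_div_of_mul_le_nsmul (g := fun y => N y - D) one_lt_two hdoub_sub hlim]

/-- If a quasi-norm satisfies the doubling property `2·N(x) ≤ N(2·x) + D`, then
`N(x) ≤ ‖x‖ + D`, where `‖·‖` is the homogenisation of `N`. -/
theorem quasinorm_le_homogenisation_add_of_doubling {V : Type*} [AddCommGroup V]
    (N : V → ℝ) (Δ : ℝ) (hΔ : 0 ≤ Δ)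
    (hnonneg : ∀ x, 0 ≤ N x)
    (hposdef : ∀ x, N x = 0 ↔ x = 0)
    (hsymm : ∀ x, N (-x) = N x)
    (htri : ∀ x y, N (x + y) ≤ N x + N y + Δ)
    (D : ℝ) (hD : 0 ≤ D)
    (hdoub : ∀ x : V, 2 * N x ≤ N (2 • x) + D)
    (ν : V → ℝ)
    (hν : ∀ x, Tendsto (fun k : ℕ => N (k • x) / k) atTop (nhds (ν x))) :
    ∀ x : V, N x ≤ ν x + D :=
  quasinorm_le_homogenisation_add_of_doubling_general N D hdoub ν hν
end

section
/- The word norm on a finitely generated free abelian group with respect to a finite generating set has uniformly bounded distance from its homogenisation: there is a constant C such that |N(x) − ‖x‖| ≤ C for all x. -/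
open Filter

/-- The word norm on an abelian group associated with a finite generating set `S`:
the minimal `∑ |a_s|` over all representations `x = ∑ a_s • s` with `a_s ∈ ℤ`. -/
noncomputable def wordNorm {V : Type*} [AddCommGroup V] (S : Finset V) (x : V) : ℕ :=
  sInf {n : ℕ | ∃ a : S → ℤ, x = ∑ s : S, a s • (s : V) ∧ ∑ s : S, (a s).natAbs = n}

/-!
The word norm `N` is subadditive, hence `N (k • x) ≤ k * N x` and `‖x‖ ≤ N x`. Conversely, write
`2 • x = ∑ a_s • s` minimally and halve the coefficients: `x = y + ∑ (a_s / 2) • s`, where `2 • y`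
is a sum of a subset of `S`. Since `V` is torsion-free, such `y` form a finite set, so `N y` is
bounded by some `K` and `2 N x ≤ N (2 • x) + D` with `D = #S + 2K`. Iterating along `2^k • x`
gives `N x ≤ ‖x‖ + D`.
-/

open Topology

section Homogenisation

variable {V : Type*} [AddMonoid V] {f : V → ℝ} {D : ℝ}

theorem le_of_tendsto_nsmul_div {x : V} {ν : ℝ} (hsub : ∀ k : ℕ, f (k • x) ≤ k * f x)
    (hν : Tendsto (fun k : ℕ => f (k • x) / k) atTop (𝓝 ν)) : ν ≤ f x := by
  refine le_of_tendsto hν (eventually_ge_atTop 1 |>.mono fun k hk => ?_)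
  rw [div_le_iff₀ (by exact_mod_cast hk), mul_comm]
  exact hsub k

theorem two_pow_mul_le_add (hdbl : ∀ y, 2 * f y ≤ f (2 • y) + D) (x : V) (k : ℕ) :
    2 ^ k * f x ≤ f (2 ^ k • x) + (2 ^ k - 1) * D := by
  induction k with
  | zero => simp
  | succ k ih =>
    have h := hdbl (2 ^ k • x)
    rw [smul_smul, ← pow_succ'] at h
    rw [pow_succ]
    linarith

theorem sub_le_of_tendsto_nsmul_div (hdbl : ∀ y, 2 * f y ≤ f (2 • y) + D) {x : V} {ν : ℝ}
    (hν : Tendsto (fun k : ℕ => f (k • x) / k) atTop (𝓝 ν)) : f x - D ≤ ν := by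
  have hpow : Tendsto (fun k : ℕ => 2 ^ k) atTop atTop :=
    tendsto_pow_atTop_atTop_of_one_lt one_lt_two
  have hlow : Tendsto (fun k : ℕ => f x - D + D / ((2 ^ k : ℕ) : ℝ)) atTop (𝓝 (f x - D)) := by
    simpa using tendsto_const_nhds.add ((tendsto_const_div_atTop_nhds_zero_nat D).comp hpow)
  refine le_of_tendsto_of_tendsto' hlow (hν.comp hpow) fun k => ?_
  have h := two_pow_mul_le_add hdbl x k
  have hk : (0 : ℝ) < 2 ^ k := by positivity
  simp only [Function.comp_apply, Nat.cast_pow, Nat.cast_ofNat]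
  rw [le_div_iff₀ hk, add_mul, div_mul_cancel₀ _ hk.ne']
  linarith

theorem abs_sub_le_of_tendsto_nsmul_div (hsub : ∀ (k : ℕ) (x : V), f (k • x) ≤ k * f x)
    (hdbl : ∀ y, 2 * f y ≤ f (2 • y) + D) {x : V} {ν : ℝ}
    (hν : Tendsto (fun k : ℕ => f (k • x) / k) atTop (𝓝 ν)) : |f x - ν| ≤ D := by
  have hle := le_of_tendsto_nsmul_div (hsub · x) hν
  have hge := sub_le_of_tendsto_nsmul_div hdbl hν
  rw [abs_of_nonneg (sub_nonneg.mpr hle)]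
  linarith

end Homogenisation

section WordNorm

variable {V : Type*} [AddCommGroup V] (S : Finset V)

theorem wordNorm_le_of_eq_sum {x : V} (a : S → ℤ) (hx : x = ∑ s : S, a s • (s : V)) :
    wordNorm S x ≤ ∑ s : S, (a s).natAbs :=
  Nat.sInf_le ⟨a, hx, rfl⟩

theorem exists_sum_natAbs_eq_wordNorm (hgen : ∀ x : V, ∃ a : S → ℤ, x = ∑ s : S, a s • (s : V))
    (x : V) :
    ∃ a : S → ℤ, x = ∑ s : S, a s • (s : V) ∧ ∑ s : S, (a s).natAbs = wordNorm S x := by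
  obtain ⟨a, ha⟩ := hgen x
  exact Nat.sInf_mem (s := {n : ℕ | ∃ a : S → ℤ,
    x = ∑ s : S, a s • (s : V) ∧ ∑ s : S, (a s).natAbs = n}) ⟨_, a, ha, rfl⟩

theorem wordNorm_zero : wordNorm S 0 = 0 :=
  Nat.eq_zero_of_le_zero <| (wordNorm_le_of_eq_sum S 0 (by simp)).trans_eq (by simp)

variable {S}

theorem wordNorm_add_le (hgen : ∀ x : V, ∃ a : S → ℤ, x = ∑ s : S, a s • (s : V)) (x y : V) :
    wordNorm S (x + y) ≤ wordNorm S x + wordNorm S y := by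
  obtain ⟨a, rfl, ha⟩ := exists_sum_natAbs_eq_wordNorm S hgen x
  obtain ⟨b, rfl, hb⟩ := exists_sum_natAbs_eq_wordNorm S hgen y
  calc wordNorm S (∑ s : S, a s • (s : V) + ∑ s : S, b s • (s : V))
      ≤ ∑ s : S, (a s + b s).natAbs :=
        wordNorm_le_of_eq_sum S _ (by simp only [add_smul, Finset.sum_add_distrib])
    _ ≤ ∑ s : S, ((a s).natAbs + (b s).natAbs) :=
        Finset.sum_le_sum fun s _ => Int.natAbs_add_le _ _
    _ = _ := by rw [Finset.sum_add_distrib, ha, hb]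

theorem wordNorm_nsmul_le (hgen : ∀ x : V, ∃ a : S → ℤ, x = ∑ s : S, a s • (s : V))
    (k : ℕ) (x : V) :
    wordNorm S (k • x) ≤ k * wordNorm S x := by
  induction k with
  | zero => simp [wordNorm_zero]
  | succ k ih =>
    rw [succ_nsmul, add_mul, one_mul]
    exact (wordNorm_add_le hgen _ _).trans (Nat.add_le_add_right ih _)

theorem exists_two_mul_wordNorm_le_add [IsAddTorsionFree V]
    (hgen : ∀ x : V, ∃ a : S → ℤ, x = ∑ s : S, a s • (s : V)) :
    ∃ D : ℕ, ∀ x : V, 2 * wordNorm S x ≤ wordNorm S (2 • x) + D := by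
  classical
  let T : Finset V := (Fintype.piFinset fun _ : S => ({0, 1} : Finset ℤ)).image
    fun r => ∑ s : S, r s • (s : V)
  obtain ⟨K, hK⟩ := ((T.finite_toSet.preimage
    (nsmul_right_injective two_ne_zero).injOn).image (wordNorm S)).exists_le
  refine ⟨S.card + 2 * K, fun x => ?_⟩
  obtain ⟨a, ha, hNa⟩ := exists_sum_natAbs_eq_wordNorm S hgen (2 • x)
  set y := x - ∑ s : S, (a s / 2) • (s : V)
  -- `a = 2 (a / 2) + a % 2` with `a % 2 ∈ {0, 1}`, so `2 • y` lies in `T`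
  have hyT : 2 • y ∈ T := by
    refine Finset.mem_image.mpr ⟨fun s => a s % 2, ?_, ?_⟩
    · simp only [Fintype.mem_piFinset, Finset.mem_insert, Finset.mem_singleton]
      exact fun s => Int.emod_two_eq_zero_or_one _
    · rw [nsmul_sub, ha, Finset.smul_sum, ← Finset.sum_sub_distrib]
      refine Finset.sum_congr rfl fun s _ => ?_
      rw [← natCast_zsmul, smul_smul, ← sub_smul]
      congr 1
      dsimp only
      omega
  have hx : wordNorm S x ≤ K + ∑ s : S, (a s / 2).natAbs :=
    calc wordNorm S x = wordNorm S (y + ∑ s : S, (a s / 2) • (s : V)) := by rw [sub_add_cancel]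
      _ ≤ _ := wordNorm_add_le hgen _ _
      _ ≤ _ := Nat.add_le_add (hK _ ⟨y, hyT, rfl⟩) (wordNorm_le_of_eq_sum S _ rfl)
  have hhalf : 2 * ∑ s : S, (a s / 2).natAbs ≤ wordNorm S (2 • x) + S.card :=
    calc 2 * ∑ s : S, (a s / 2).natAbs ≤ ∑ s : S, ((a s).natAbs + 1) := by
          rw [Finset.mul_sum]
          exact Finset.sum_le_sum fun s _ => by omega
      _ = wordNorm S (2 • x) + S.card := by
          rw [Finset.sum_add_distrib, hNa, Finset.sum_const, Finset.card_univ, Fintype.card_coe,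
            smul_eq_mul, mul_one]
  omega

end WordNorm

/-- The word norm on a finitely generated free abelian group with respect to a finite
generating set has uniformly bounded distance from its homogenisation
`ν x = lim_k N(k·x)/k`. -/
theorem wordNorm_bounded_distance_from_homogenisation {V : Type*} [AddCommGroup V]
    [Module.Free ℤ V] (S : Finset V)
    (hgen : ∀ x : V, ∃ a : S → ℤ, x = ∑ s : S, a s • (s : V))
    (ν : V → ℝ)
    (hν : ∀ x : V, Tendsto (fun k : ℕ => (wordNorm S (k • x) : ℝ) / k) atTop (nhds (ν x))) :
    ∃ C : ℝ, ∀ x : V, |(wordNorm S x : ℝ) - ν x| ≤ C := by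
  have : IsAddTorsionFree V := .of_isTorsionFree ℤ V
  obtain ⟨D, hD⟩ := exists_two_mul_wordNorm_le_add hgen
  refine ⟨D, fun x => abs_sub_le_of_tendsto_nsmul_div (f := fun y => (wordNorm S y : ℝ))
    (fun k y => ?_) (fun y => ?_) (hν x)⟩
  · exact_mod_cast wordNorm_nsmul_le hgen k y
  · exact_mod_cast hD y
end

section
/- Let h be an additive, J-Lipschitz segment functional on a curve γ : ℝ → M as above. Then every mixed asymptote is a convex combination of a terminal and an initial asymptote: A_tot(γ) ⊆ {τ·v₊ + (1−τ)·v₋ : τ ∈ [0,1], v₊ ∈ A⁺(γ), v₋ ∈ A⁻(γ)}, and moreover A⁺(γ) ∪ A⁻(γ) ⊆ A_tot(γ). -/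
/-!
Splitting a segment `[s, t]` with `s < 0 < t` at `0` writes its mean value as the convex
combination, with weight `t / (t - s)`, of the mean values over `[0, t]` and `[s, 0]`. All these
mean values lie in the closed `J`-ball, so along a subsequence the weight and both means converge,
which gives the first inclusion. Conversely, pairing `t` with `s = -√t` drives the weight to `1`
while the bounded initial mean is multiplied by a weight tending to `0`; time reversal
`h a b ↦ h (-b) (-a)` exchanges initial and terminal asymptotes.
-/

open Filter

/-- Terminal asymptotes (with start point `0`) of an additive segment functional. -/
def Aplus {V : Type*} [NormedAddCommGroup V] [NormedSpace ℝ V]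
    (h : ℝ → ℝ → V) : Set V :=
  {v : V | ∃ t : ℕ → ℝ, Tendsto t atTop atTop ∧ (∀ i, 0 < t i) ∧
    Tendsto (fun i => (t i)⁻¹ • h 0 (t i)) atTop (nhds v)}

/-- Initial asymptotes (with start point `0`) of an additive segment functional. -/
def Aminus {V : Type*} [NormedAddCommGroup V] [NormedSpace ℝ V]
    (h : ℝ → ℝ → V) : Set V :=
  {v : V | ∃ s : ℕ → ℝ, Tendsto s atTop atBot ∧ (∀ i, s i < 0) ∧
    Tendsto (fun i => (0 - s i)⁻¹ • h (s i) 0) atTop (nhds v)}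

/-- Mixed asymptotes of an additive segment functional. -/
def Atot {V : Type*} [NormedAddCommGroup V] [NormedSpace ℝ V]
    (h : ℝ → ℝ → V) : Set V :=
  {v : V | ∃ s t : ℕ → ℝ, Tendsto s atTop atBot ∧ Tendsto t atTop atTop ∧
    (∀ i, s i < t i) ∧
    Tendsto (fun i => (t i - s i)⁻¹ • h (s i) (t i)) atTop (nhds v)}

open Topology Metric

lemma tendsto_div_add_sqrt_atTop : Tendsto (fun x : ℝ => x / (x + √x)) atTop (𝓝 1) := by
  have hlim : Tendsto (fun x : ℝ => (1 + (√x)⁻¹)⁻¹) atTop (𝓝 1) := by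
    simpa using ((tendsto_inv_atTop_zero.comp Real.tendsto_sqrt_atTop).const_add 1).inv₀
      (by norm_num)
  refine hlim.congr' ((eventually_gt_atTop 0).mono fun x hx => ?_)
  field_simp
  linear_combination Real.mul_self_sqrt hx.le

lemma tendsto_smul_add_one_sub_smul {α V : Type*} [NormedAddCommGroup V] [NormedSpace ℝ V]
    {l : Filter α} {τ : α → ℝ} {p m : α → V} {v : V} (hτ : Tendsto τ l (𝓝 1))
    (hp : Tendsto p l (𝓝 v)) (hm : IsBoundedUnder (· ≤ ·) l (norm ∘ m)) :
    Tendsto (fun i => τ i • p i + (1 - τ i) • m i) l (𝓝 v) := by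
  have hτ' : Tendsto (fun i => 1 - τ i) l (𝓝 0) := by
    simpa using (tendsto_const_nhds (x := (1 : ℝ))).sub hτ
  simpa using (hτ.smul hp).add (hτ'.zero_smul_isBoundedUnder_le hm)

section SegmentFunctional

variable {V : Type*} [NormedAddCommGroup V] [NormedSpace ℝ V] {h : ℝ → ℝ → V} {J : ℝ}

lemma inv_sub_smul_eq_add (hadd : ∀ a b c : ℝ, a ≤ b → b ≤ c → h a c = h a b + h b c)
    {s t : ℝ} (hs : s < 0) (ht : 0 < t) :
    (t - s)⁻¹ • h s t =
      (t / (t - s)) • (t⁻¹ • h 0 t) + (1 - t / (t - s)) • ((0 - s)⁻¹ • h s 0) := by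
  have hts : t - s ≠ 0 := by linarith
  have hweight : 1 - t / (t - s) = (0 - s) / (t - s) := by field_simp; ring
  have hp : t / (t - s) * t⁻¹ = (t - s)⁻¹ := by
    rw [div_mul_eq_mul_div, mul_inv_cancel₀ ht.ne', one_div]
  have hm : (0 - s) / (t - s) * (0 - s)⁻¹ = (t - s)⁻¹ := by
    rw [div_mul_eq_mul_div, mul_inv_cancel₀ (by linarith), one_div]
  rw [hadd s 0 t hs.le ht.le, smul_add, add_comm, hweight, smul_smul, smul_smul, hp, hm]

lemma norm_inv_sub_smul_le (hbound : ∀ a b : ℝ, a ≤ b → ‖h a b‖ ≤ J * (b - a))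
    {a b : ℝ} (hab : a < b) : ‖(b - a)⁻¹ • h a b‖ ≤ J := by
  rw [norm_smul, norm_inv, Real.norm_of_nonneg (sub_nonneg.2 hab.le),
    inv_mul_le_iff₀ (sub_pos.2 hab), mul_comm]
  exact hbound a b hab.le

lemma mem_Aplus_of_tendsto {t : ℕ → ℝ} {v : V} (ht : Tendsto t atTop atTop)
    (hv : Tendsto (fun i => (t i)⁻¹ • h 0 (t i)) atTop (𝓝 v)) : v ∈ Aplus h := by
  obtain ⟨N, hN⟩ := eventually_atTop.1 (ht.eventually_gt_atTop 0)
  exact ⟨fun i => t (i + N), ht.comp (tendsto_add_atTop_nat N), fun i => hN _ (by omega),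
    hv.comp (tendsto_add_atTop_nat N)⟩

lemma mem_Aminus_of_tendsto {s : ℕ → ℝ} {v : V} (hs : Tendsto s atTop atBot)
    (hv : Tendsto (fun i => (0 - s i)⁻¹ • h (s i) 0) atTop (𝓝 v)) : v ∈ Aminus h := by
  obtain ⟨N, hN⟩ := eventually_atTop.1 (hs.eventually_lt_atBot 0)
  exact ⟨fun i => s (i + N), hs.comp (tendsto_add_atTop_nat N), fun i => hN _ (by omega),
    hv.comp (tendsto_add_atTop_nat N)⟩

lemma exists_eq_convexComb_of_mem_Atot [FiniteDimensional ℝ V]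
    (hadd : ∀ a b c : ℝ, a ≤ b → b ≤ c → h a c = h a b + h b c)
    (hbound : ∀ a b : ℝ, a ≤ b → ‖h a b‖ ≤ J * (b - a)) {v : V} (hv : v ∈ Atot h) :
    ∃ τ ∈ Set.Icc (0 : ℝ) 1, ∃ vp ∈ Aplus h, ∃ vm ∈ Aminus h, v = τ • vp + (1 - τ) • vm := by
  obtain ⟨s, t, hs, ht, -, hv⟩ := hv
  have hsign : ∀ᶠ i in atTop, s i < 0 ∧ 0 < t i :=
    (hs.eventually_lt_atBot 0).and (ht.eventually_gt_atTop 0)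
  set x : ℕ → ℝ × V × V :=
    fun i => (t i / (t i - s i), (t i)⁻¹ • h 0 (t i), (0 - s i)⁻¹ • h (s i) 0)
  have hx : ∀ᶠ i in atTop, x i ∈ Set.Icc 0 1 ×ˢ closedBall 0 J ×ˢ closedBall 0 J := by
    refine hsign.mono fun i ⟨hsi, hti⟩ => ⟨⟨div_nonneg hti.le (by linarith), ?_⟩, ?_, ?_⟩
    · exact (div_le_one (by linarith)).2 (by linarith)
    · simpa using norm_inv_sub_smul_le hbound hti
    · exact mem_closedBall_zero_iff.2 (norm_inv_sub_smul_le hbound hsi)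
  have hK : IsCompact (Set.Icc (0 : ℝ) 1 ×ˢ closedBall (0 : V) J ×ˢ closedBall (0 : V) J) :=
    isCompact_Icc.prod ((isCompact_closedBall 0 J).prod (isCompact_closedBall 0 J))
  obtain ⟨⟨τ, vp, vm⟩, ⟨hτ, -, -⟩, φ, hφ, hlim⟩ := hK.tendsto_subseq' hx.frequently
  have hφ := hφ.tendsto_atTop
  refine ⟨τ, hτ, vp, mem_Aplus_of_tendsto (ht.comp hφ) hlim.snd_nhds.fst_nhds,
    vm, mem_Aminus_of_tendsto (hs.comp hφ) hlim.snd_nhds.snd_nhds, ?_⟩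
  have hcomb : Continuous fun y : ℝ × V × V => y.1 • y.2.1 + (1 - y.1) • y.2.2 := by fun_prop
  refine tendsto_nhds_unique (hv.comp hφ) (((hcomb.tendsto _).comp hlim).congr' ?_)
  exact (hφ.eventually hsign).mono fun i ⟨hsi, hti⟩ => (inv_sub_smul_eq_add hadd hsi hti).symm

lemma Aplus_subset_Atot (hadd : ∀ a b c : ℝ, a ≤ b → b ≤ c → h a c = h a b + h b c)
    (hbound : ∀ a b : ℝ, a ≤ b → ‖h a b‖ ≤ J * (b - a)) : Aplus h ⊆ Atot h := by
  rintro v ⟨t, ht, htpos, hv⟩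
  have hspos : ∀ i, 0 < √(t i) := fun i => Real.sqrt_pos.2 (htpos i)
  refine ⟨fun i => -√(t i), t, tendsto_neg_atTop_atBot.comp (Real.tendsto_sqrt_atTop.comp ht),
    ht, fun i => (neg_neg_of_pos (hspos i)).trans (htpos i), ?_⟩
  have hτ : Tendsto (fun i => t i / (t i - -√(t i))) atTop (𝓝 1) := by
    simpa only [sub_neg_eq_add, Function.comp_def] using tendsto_div_add_sqrt_atTop.comp ht
  have hm : IsBoundedUnder (· ≤ ·) atTop (norm ∘ fun i => (0 - -√(t i))⁻¹ • h (-√(t i)) 0) :=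
    isBoundedUnder_of ⟨J, fun i => norm_inv_sub_smul_le hbound (neg_neg_of_pos (hspos i))⟩
  refine (tendsto_smul_add_one_sub_smul hτ hv hm).congr fun i => ?_
  exact (inv_sub_smul_eq_add hadd (neg_neg_of_pos (hspos i)) (htpos i)).symm

lemma Aminus_subset_Aplus_reverse : Aminus h ⊆ Aplus (fun a b => h (-b) (-a)) := by
  rintro v ⟨s, hs, hsneg, hv⟩
  exact ⟨fun i => -s i, tendsto_neg_atBot_atTop.comp hs, fun i => neg_pos.2 (hsneg i),
    by simpa using hv⟩

lemma Atot_reverse_subset : Atot (fun a b => h (-b) (-a)) ⊆ Atot h := by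
  rintro v ⟨s, t, hs, ht, hst, hv⟩
  refine ⟨fun i => -t i, fun i => -s i, tendsto_neg_atTop_atBot.comp ht,
    tendsto_neg_atBot_atTop.comp hs, fun i => neg_lt_neg (hst i), ?_⟩
  simpa only [neg_sub_neg] using hv

lemma Aminus_subset_Atot (hadd : ∀ a b c : ℝ, a ≤ b → b ≤ c → h a c = h a b + h b c)
    (hbound : ∀ a b : ℝ, a ≤ b → ‖h a b‖ ≤ J * (b - a)) : Aminus h ⊆ Atot h := by
  have hadd' (a b c : ℝ) (hab : a ≤ b) (hbc : b ≤ c) :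
      h (-c) (-a) = h (-b) (-a) + h (-c) (-b) := by
    rw [hadd _ _ _ (neg_le_neg hbc) (neg_le_neg hab), add_comm]
  have hbound' (a b : ℝ) (hab : a ≤ b) : ‖h (-b) (-a)‖ ≤ J * (b - a) :=
    (hbound _ _ (neg_le_neg hab)).trans_eq (by ring)
  exact Aminus_subset_Aplus_reverse.trans
    ((Aplus_subset_Atot hadd' hbound').trans Atot_reverse_subset)

end SegmentFunctional

/-- Every mixed asymptote is a convex combination of a terminal and an initial
asymptote, and the terminal and initial asymptotes are mixed asymptotes. -/
theorem Atot_subset_convexJoin {V : Type*} [NormedAddCommGroup V]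
    [NormedSpace ℝ V] [FiniteDimensional ℝ V]
    (h : ℝ → ℝ → V) (J : ℝ)
    (hadd : ∀ a b c : ℝ, a ≤ b → b ≤ c → h a c = h a b + h b c)
    (hbound : ∀ a b : ℝ, a ≤ b → ‖h a b‖ ≤ J * (b - a)) :
    Atot h ⊆ {x : V | ∃ τ ∈ Set.Icc (0 : ℝ) 1, ∃ vp ∈ Aplus h, ∃ vm ∈ Aminus h,
        x = τ • vp + (1 - τ) • vm} ∧
    Aplus h ∪ Aminus h ⊆ Atot h :=
  ⟨fun _ hv => exists_eq_convexComb_of_mem_Atot hadd hbound hv,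
    Set.union_subset (Aplus_subset_Atot hadd hbound) (Aminus_subset_Atot hadd hbound)⟩
end

section
/- A closed connected Riemannian manifold M admits a minimal geodesic if and only if its fundamental group π₁(M) is infinite. Equivalently, the universal Riemannian covering M̃ of a closed connected Riemannian manifold contains a geodesic line (an isometric embedding of ℝ) if and only if M̃ has infinite diameter, which holds iff π₁(M) is infinite. -/
/-!
Both conditions on the deck group amount to `X` being noncompact: a finite group acting
cocompactly leaves `X` compact, and a properly discontinuous action on a compact space has finite
group. A line makes `X` noncompact. Conversely, in a noncompact `X` take geodesic segments of
lengths `→ ∞`, move their midpoints into the compact set `K` by deck transformations, and take the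
pointwise limit of the recentred segments along a nonprincipal ultrafilter: it is a line.
-/

open Set Filter Topology Metric

theorem ProperlyDiscontinuousSMul.finite_of_compactSpace (G : Type*) {X : Type*}
    [TopologicalSpace X] [CompactSpace X] [Nonempty X] [SMul G X] [ProperlyDiscontinuousSMul G X] :
    Finite G := by
  obtain ⟨x⟩ := ‹Nonempty X›
  exact Set.finite_univ_iff.mp ((finite_disjoint_inter_image (Γ := G) isCompact_univ
    isCompact_univ).subset fun g _ => ⟨g • x, ⟨x, trivial, rfl⟩, trivial⟩)

theorem compactSpace_of_finite_of_cocompact {G X : Type*} [TopologicalSpace X] [Group G]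
    [Finite G] [MulAction G X] [ContinuousConstSMul G X] {K : Set X} (hK : IsCompact K)
    (hcov : ∀ x : X, ∃ g : G, g • x ∈ K) : CompactSpace X := by
  refine ⟨(isCompact_iUnion fun g : G => hK.smul g⁻¹).of_isClosed_subset isClosed_univ
    fun x _ => ?_⟩
  obtain ⟨g, hg⟩ := hcov x
  exact mem_iUnion.2 ⟨g, ⟨g • x, hg, inv_smul_smul g x⟩⟩

theorem compactSpace_iff_finite_of_cocompact {G X : Type*} [TopologicalSpace X] [Nonempty X]
    [Group G] [MulAction G X] [ContinuousConstSMul G X] [ProperlyDiscontinuousSMul G X]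
    {K : Set X} (hK : IsCompact K) (hcov : ∀ x : X, ∃ g : G, g • x ∈ K) :
    CompactSpace X ↔ Finite G :=
  ⟨fun _ => ProperlyDiscontinuousSMul.finite_of_compactSpace G (X := X),
    fun _ => compactSpace_of_finite_of_cocompact hK hcov⟩

/-- The curve is the segment `γ` recentred at its midpoint and extended by constants. -/
theorem exists_lipschitz_isometricOn_of_segment {X : Type*} [PseudoMetricSpace X] {γ : ℝ → X}
    {L : ℝ} (hL : 0 ≤ L) (hγ : ∀ s ∈ Icc 0 L, ∀ t ∈ Icc 0 L, dist (γ s) (γ t) = |s - t|) :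
    ∃ σ : ℝ → X, LipschitzWith 1 σ ∧
      ∀ s t, |s| ≤ L / 2 → |t| ≤ L / 2 → dist (σ s) (σ t) = |s - t| := by
  set c : ℝ → ℝ := fun t => projIcc 0 L hL (t + L / 2)
  have hc : ∀ t, |t| ≤ L / 2 → c t = t + L / 2 := fun t ht => by
    rw [abs_le] at ht
    simp only [c, projIcc_of_mem hL (show t + L / 2 ∈ Icc 0 L from ⟨by linarith, by linarith⟩)]
  have hdist : ∀ s t, dist (γ (c s)) (γ (c t)) = |c s - c t| := fun s t =>
    hγ _ (Subtype.mem _) _ (Subtype.mem _)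
  refine ⟨γ ∘ c, LipschitzWith.of_dist_le_mul fun s t => ?_, fun s t hs ht => ?_⟩
  · rw [Function.comp_apply, Function.comp_apply, hdist, NNReal.coe_one, one_mul, Real.dist_eq]
    have := abs_projIcc_sub_projIcc hL (c := s + L / 2) (d := t + L / 2)
    rwa [add_sub_add_right_eq_sub] at this
  · rw [Function.comp_apply, Function.comp_apply, hdist, hc s hs, hc t ht,
      add_sub_add_right_eq_sub]

theorem exists_isometry_of_eventually_dist_eq {X : Type*} [MetricSpace X] [ProperSpace X]
    {K : Set X} (hK : IsCompact K) (δ : ℕ → ℝ → X) (hlip : ∀ n, LipschitzWith 1 (δ n))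
    (hbase : ∀ n, δ n 0 ∈ K) (hexact : ∀ s t, ∀ᶠ n in atTop, dist (δ n s) (δ n t) = |s - t|) :
    ∃ γ : ℝ → X, Isometry γ := by
  have hlim : ∀ t, ∃ a, Tendsto (δ · t) (hyperfilter ℕ) (𝓝 a) := fun t => by
    have hmem : ∀ n, δ n t ∈ cthickening |t| K := fun n =>
      mem_cthickening_of_dist_le _ _ _ _ (hbase n) <| by
        simpa [Real.dist_eq] using (hlip n).dist_le_mul t 0
    obtain ⟨a, -, ha⟩ := (hK.cthickening (r := |t|)).ultrafilter_le_nhds'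
      ((hyperfilter ℕ).map (δ · t)) (Ultrafilter.mem_map.2 (univ_mem' hmem))
    exact ⟨a, ha⟩
  choose γ hγ using hlim
  refine ⟨γ, Isometry.of_dist_eq fun s t => tendsto_nhds_unique ((hγ s).dist (hγ t)) ?_⟩
  rw [Real.dist_eq]
  exact tendsto_const_nhds.congr' (EventuallyEq.symm (Nat.hyperfilter_le_atTop (hexact s t)))

theorem exists_isometry_of_noncompact_of_cocompact {X G : Type*} [MetricSpace X] [ProperSpace X]
    [NoncompactSpace X]
    (hgeo : ∀ x y : X, ∃ γ : ℝ → X, γ 0 = x ∧ γ (dist x y) = y ∧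
      ∀ s ∈ Icc (0 : ℝ) (dist x y), ∀ t ∈ Icc (0 : ℝ) (dist x y), dist (γ s) (γ t) = |s - t|)
    [SMul G X] [IsIsometricSMul G X] {K : Set X} (hK : IsCompact K)
    (hcov : ∀ x : X, ∃ g : G, g • x ∈ K) :
    ∃ γ : ℝ → X, Isometry γ := by
  have hfar : ∀ n : ℕ, ∃ p q : X, 2 * n ≤ dist p q := fun n => by
    by_contra! h
    exact not_compactSpace_iff.2 ‹_› <| compactSpace_iff_isBounded_univ.2 <|
      isBounded_iff.2 ⟨2 * n, fun x _ y _ => (h x y).le⟩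
  choose p q hpq using hfar
  choose γ _ _ hγ using fun n => hgeo (p n) (q n)
  choose σ hσlip hσ using fun n => exists_lipschitz_isometricOn_of_segment dist_nonneg (hγ n)
  choose g hg using fun n => hcov (σ n 0)
  refine exists_isometry_of_eventually_dist_eq hK (fun n t => g n • σ n t)
    (fun n => by
      simpa [Function.comp_def] using (isometry_smul X (g n)).lipschitz.comp (hσlip n))
    hg fun s t => ?_
  filter_upwards [eventually_ge_atTop ⌈max |s| |t|⌉₊] with n hceil
  have hn : max |s| |t| ≤ dist (p n) (q n) / 2 := by
    linarith [Nat.ceil_le.1 hceil, hpq n]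
  rw [dist_smul]
  exact hσ n s t ((le_max_left _ _).trans hn) ((le_max_right _ _).trans hn)

/-- Existence of minimal geodesics and the fundamental group, in metric form: let `X`
be a nonempty proper geodesic metric space (the universal Riemannian covering `M̃` of a
closed connected Riemannian manifold) on which a group `G` (the fundamental group
`π₁(M)`, i.e. the deck transformation group) acts isometrically, properly
discontinuously and cocompactly. Then `X` contains a geodesic line (an isometric
embedding of `ℝ`, i.e. a minimal geodesic) if and only if `G` is infinite, and `X` has
infinite diameter if and only if `G` is infinite. -/
theorem exists_line_iff_infinite_deck_group {X : Type*} [MetricSpace X] [ProperSpace X]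
    [Nonempty X]
    (hgeo : ∀ x y : X, ∃ γ : ℝ → X, γ 0 = x ∧ γ (dist x y) = y ∧
      ∀ s ∈ Set.Icc (0 : ℝ) (dist x y), ∀ t ∈ Set.Icc (0 : ℝ) (dist x y),
        dist (γ s) (γ t) = |s - t|)
    (G : Type*) [Group G] [MulAction G X] [IsIsometricSMul G X]
    [ProperlyDiscontinuousSMul G X]
    (hcocompact : ∃ K : Set X, IsCompact K ∧ ∀ x : X, ∃ g : G, g • x ∈ K) :
    ((∃ γ : ℝ → X, Isometry γ) ↔ Infinite G) ∧
    (EMetric.diam (Set.univ : Set X) = ⊤ ↔ Infinite G) := by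
  obtain ⟨K, hK, hcov⟩ := hcocompact
  have hnoncompact : NoncompactSpace X ↔ Infinite G := by
    rw [← not_compactSpace_iff, compactSpace_iff_finite_of_cocompact hK hcov,
      not_finite_iff_infinite]
  have hline : (∃ γ : ℝ → X, Isometry γ) ↔ NoncompactSpace X :=
    ⟨fun ⟨γ, hγ⟩ => hγ.isClosedEmbedding.noncompactSpace,
      fun _ => exists_isometry_of_noncompact_of_cocompact hgeo hK hcov⟩
  exact ⟨hline.trans hnoncompact, ediam_univ_eq_top_iff_noncompact.trans hnoncompact⟩
end
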